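/- The string rewriting system on the alphabet {a, b, c, d, d'} with rules a cⁿ b → a cⁿ for all n ∈ ℕ, d a → a c, d' a → a c is convergent (terminating and confluent), and the monoid it presents is also presented by the finite system ⟨a, b, c, d, d' ∣ ab = a, da = ac, d'a = ac⟩. -/

import Mathlib

/-- The alphabet {a, b, c, d, d'} of the Lafont–Prouté example. -/
inductive LP : Type
  | a : LP
  | b : LP
  | c : LP
  | d : LP
  | d' : LP

open LP

/-- One step of string rewriting for a set of rules `R`. The equivalence
closure of this relation is the congruence on the free monoid generated by
the relations `R`. -/
def StringStep {A : Type*} (R : Set (List A × List A)) (u v : List A) : Prop :=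
  ∃ p l r s : List A, (l, r) ∈ R ∧ u = p ++ l ++ s ∧ v = p ++ r ++ s

/-- The infinite system: a cⁿ b → a cⁿ (n ∈ ℕ), da → ac, d'a → ac. -/
def LPInfRules : Set (List LP × List LP) :=
  {p | (∃ n : ℕ, p = (a :: List.replicate n c ++ [b], a :: List.replicate n c)) ∨
    p = ([d, a], [a, c]) ∨ p = ([d', a], [a, c])}

/-- The finite system: ab → a, da → ac, d'a → ac. -/
def LPFinRules : Set (List LP × List LP) :=
  {([a, b], [a]), ([d, a], [a, c]), ([d', a], [a, c])}


/-!
Every rule strictly decreases the weighted length in which `d` and `d'` weigh 2 and the other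
letters 1, so the system terminates. For confluence we give an explicit normal form, computed
right to left by `consNF`: prepending `d` or `d'` to a word starting with `a` turns the pair
into `ac`, and prepending `a` deletes the `b`s of the following block of `c`s and `b`s. This
function is reachable from every word and is invariant under every rule, which gives
confluence. Finally, the finite rules are among the infinite ones, and conversely
`a cⁿ⁺¹ b ← d a cⁿ b ~ d a cⁿ → a cⁿ⁺¹` derives each `a cⁿ b = a cⁿ` from `ab = a` and
`da = ac`.
-/

namespace StringStep

variable {A : Type*} {R S : Set (List A × List A)}

theorem of_mem_append {l r : List A} (h : (l, r) ∈ R) (p s : List A) :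
    StringStep R (p ++ l ++ s) (p ++ r ++ s) :=
  ⟨p, l, r, s, h, rfl, rfl⟩

theorem of_mem {l r : List A} (h : (l, r) ∈ R) : StringStep R l r := by
  simpa using of_mem_append h [] []

theorem mono (hRS : R ⊆ S) : StringStep R ≤ StringStep S := by
  rintro _ _ ⟨p, l, r, s, hlr, rfl, rfl⟩
  exact of_mem_append (hRS hlr) p s

theorem append_append {u v : List A} (h : StringStep R u v) (p s : List A) :
    StringStep R (p ++ u ++ s) (p ++ v ++ s) := by
  obtain ⟨p', l, r, s', hlr, rfl, rfl⟩ := h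
  simpa only [List.append_assoc] using of_mem_append hlr (p ++ p') (s' ++ s)

theorem cons {u v : List A} (h : StringStep R u v) (x : A) :
    StringStep R (x :: u) (x :: v) := by
  simpa using h.append_append [x] []

theorem eqvGen_append_append {u v : List A} (h : Relation.EqvGen (StringStep R) u v)
    (p s : List A) : Relation.EqvGen (StringStep R) (p ++ u ++ s) (p ++ v ++ s) := by
  induction h with
  | rel _ _ h => exact .rel _ _ (h.append_append p s)
  | refl => exact .refl _
  | symm _ _ _ ih => exact .symm _ _ ih
  | trans _ _ _ _ _ ih₁ ih₂ => exact .trans _ _ _ ih₁ ih₂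

theorem eqvGen_le_of_forall_mem (hS : ∀ l r, (l, r) ∈ S → Relation.EqvGen (StringStep R) l r)
    {u v : List A} (h : Relation.EqvGen (StringStep S) u v) :
    Relation.EqvGen (StringStep R) u v := by
  induction h with
  | rel _ _ h =>
    obtain ⟨p, l, r, s, hlr, rfl, rfl⟩ := h
    exact eqvGen_append_append (hS l r hlr) p s
  | refl => exact .refl _
  | symm _ _ _ ih => exact .symm _ _ ih
  | trans _ _ _ _ _ ih₁ ih₂ => exact .trans _ _ _ ih₁ ih₂

theorem weight_lt {w : A → ℕ} (hR : ∀ l r, (l, r) ∈ R → (r.map w).sum < (l.map w).sum)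
    {u v : List A} (h : StringStep R u v) : (v.map w).sum < (u.map w).sum := by
  obtain ⟨p, l, r, s, hlr, rfl, rfl⟩ := h
  have := hR l r hlr
  simp only [List.map_append, List.sum_append]
  omega

end StringStep

theorem not_exists_chain_of_measure_lt {α : Type*} {r : α → α → Prop} (μ : α → ℕ)
    (hμ : ∀ x y, r x y → μ y < μ x) : ¬ ∃ f : ℕ → α, ∀ n, r (f n) (f (n + 1)) := by
  rintro ⟨f, hf⟩
  have : IsWellFounded α (InvImage (· < ·) μ) := ⟨(measure μ).wf⟩
  obtain ⟨n, hn⟩ := WellFounded.not_rel_apply_succ (r := InvImage (· < ·) μ) f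
  exact hn (hμ _ _ (hf n))

theorem join_of_reflTransGen_normalForm {α : Type*} {r : α → α → Prop} (nf : α → α)
    (hreach : ∀ x, Relation.ReflTransGen r x (nf x)) (hinv : ∀ x y, r x y → nf x = nf y)
    {x y z : α} (hxy : Relation.ReflTransGen r x y) (hxz : Relation.ReflTransGen r x z) :
    ∃ w, Relation.ReflTransGen r y w ∧ Relation.ReflTransGen r z w := by
  have hnf : ∀ {y}, Relation.ReflTransGen r x y → nf x = nf y := fun h => by
    induction h with
    | refl => rfl
    | tail _ h ih => exact ih.trans (hinv _ _ h)
  exact ⟨nf x, hnf hxy ▸ hreach y, hnf hxz ▸ hreach z⟩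

namespace LP

def weight : LP → ℕ
  | d => 2
  | d' => 2
  | _ => 1

theorem weight_lt_of_mem_LPInfRules {l r : List LP} (h : (l, r) ∈ LPInfRules) :
    (r.map weight).sum < (l.map weight).sum := by
  rcases h with ⟨n, h⟩ | h | h <;> cases h <;> simp [weight]

/-- For `t` in normal form, `a :: eraseLeadingB t` is the normal form of `a :: t`: the rules
`a cⁿ b → a cⁿ` delete exactly the `b`s reachable from the `a` through `c`s and `b`s. -/
def eraseLeadingB : List LP → List LP
  | b :: t => eraseLeadingB t
  | c :: t => c :: eraseLeadingB t
  | t => t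

theorem eraseLeadingB_replicate_append (n : ℕ) (t : List LP) :
    eraseLeadingB (List.replicate n c ++ t) = List.replicate n c ++ eraseLeadingB t := by
  induction n with
  | zero => rfl
  | succ n ih => simp [List.replicate_succ, eraseLeadingB, ih]

def consNF : LP → List LP → List LP
  | a, t => a :: eraseLeadingB t
  | d, a :: t => a :: c :: t
  | d', a :: t => a :: c :: t
  | x, t => x :: t

def normalForm (w : List LP) : List LP := w.foldr consNF []

theorem foldr_consNF_replicate (n : ℕ) (m : List LP) :
    (List.replicate n c).foldr consNF m = List.replicate n c ++ m := by
  induction n with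
  | zero => rfl
  | succ n ih => simp [List.replicate_succ, consNF, ih]

theorem foldr_consNF_eq_of_mem_LPInfRules {l r : List LP} (h : (l, r) ∈ LPInfRules)
    (m : List LP) : l.foldr consNF m = r.foldr consNF m := by
  rcases h with ⟨n, h⟩ | h | h <;> cases h
  · simp [foldr_consNF_replicate, consNF, eraseLeadingB_replicate_append, eraseLeadingB]
  · rfl
  · rfl

theorem normalForm_eq_of_stringStep {u v : List LP} (h : StringStep LPInfRules u v) :
    normalForm u = normalForm v := by
  obtain ⟨p, l, r, s, hlr, rfl, rfl⟩ := h
  simp only [normalForm, List.foldr_append, foldr_consNF_eq_of_mem_LPInfRules hlr]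

local notation:50 u " ⟶* " v => Relation.ReflTransGen (StringStep LPInfRules) u v

theorem reflTransGen_cons {u v : List LP} (h : u ⟶* v) (x : LP) : x :: u ⟶* x :: v :=
  h.lift (x :: ·) fun _ _ h => h.cons x

theorem reflTransGen_eraseLeadingB (t : List LP) (n : ℕ) :
    a :: (List.replicate n c ++ t) ⟶* a :: (List.replicate n c ++ eraseLeadingB t) := by
  induction t generalizing n with
  | nil => rfl
  | cons x t ih =>
    cases x with
    | b =>
      have hb : StringStep LPInfRules (a :: (List.replicate n c ++ b :: t))
          (a :: (List.replicate n c ++ t)) := by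
        simpa using (StringStep.of_mem (R := LPInfRules) (Or.inl ⟨n, rfl⟩)).append_append [] t
      exact .head hb (ih n)
    | c => simpa [List.replicate_succ', eraseLeadingB] using ih (n + 1)
    | a | d | d' => rfl

theorem reflTransGen_consNF (x : LP) (t : List LP) : x :: t ⟶* consNF x t := by
  fun_cases consNF x t
  · simpa using reflTransGen_eraseLeadingB t 0
  · exact .single
      (StringStep.of_mem_append (l := [d, a]) (r := [a, c]) (.inr (.inl rfl)) [] _)
  · exact .single
      (StringStep.of_mem_append (l := [d', a]) (r := [a, c]) (.inr (.inr rfl)) [] _)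
  · rfl

theorem reflTransGen_normalForm (u : List LP) : u ⟶* normalForm u := by
  induction u with
  | nil => rfl
  | cons x w ih => exact (reflTransGen_cons ih x).trans (reflTransGen_consNF x (normalForm w))

theorem eqvGen_acPowB_LPFinRules (n : ℕ) :
    Relation.EqvGen (StringStep LPFinRules) (a :: List.replicate n c ++ [b])
      (a :: List.replicate n c) := by
  induction n with
  | zero => exact .rel _ _ (StringStep.of_mem (by simp [LPFinRules]))
  | succ n ih =>
    have hda (s : List LP) : StringStep LPFinRules (d :: a :: s) (a :: c :: s) :=
      StringStep.of_mem_append (l := [d, a]) (r := [a, c]) (by simp [LPFinRules]) [] s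
    have ih' := StringStep.eqvGen_append_append ih [d] []
    simp only [List.replicate_succ, List.cons_append, List.append_nil] at ih' ⊢
    exact .trans _ _ _ (.symm _ _ (.rel _ _ (hda _))) (.trans _ _ _ ih' (.rel _ _ (hda _)))

theorem LPFinRules_subset_LPInfRules : LPFinRules ⊆ LPInfRules := by
  rintro _ (rfl | rfl | rfl)
  · exact Or.inl ⟨0, rfl⟩
  · exact Or.inr (Or.inl rfl)
  · exact Or.inr (Or.inr rfl)

end LP

/-- The infinite string rewriting system with rules a cⁿ b → a cⁿ (n ∈ ℕ),
da → ac, d'a → ac is convergent — terminating and confluent — and it presents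
the same monoid as the finite system ⟨a, b, c, d, d' ∣ ab = a, da = ac,
d'a = ac⟩: the two systems generate the same congruence on the free monoid. -/
theorem LP_infinite_system_convergent_and_presents_same_monoid :
    (¬ ∃ f : ℕ → List LP, ∀ n : ℕ, StringStep LPInfRules (f n) (f (n + 1))) ∧
    (∀ u v w : List LP,
      Relation.ReflTransGen (StringStep LPInfRules) u v →
      Relation.ReflTransGen (StringStep LPInfRules) u w →
      ∃ z : List LP, Relation.ReflTransGen (StringStep LPInfRules) v z ∧
        Relation.ReflTransGen (StringStep LPInfRules) w z) ∧
    (∀ u v : List LP, Relation.EqvGen (StringStep LPInfRules) u v ↔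
      Relation.EqvGen (StringStep LPFinRules) u v) := by
  refine ⟨?_, ?_, fun u v => ⟨?_, ?_⟩⟩
  · exact not_exists_chain_of_measure_lt (fun w => (w.map weight).sum)
      fun _ _ => StringStep.weight_lt fun _ _ => weight_lt_of_mem_LPInfRules
  · exact fun u v w => join_of_reflTransGen_normalForm normalForm reflTransGen_normalForm
      fun _ _ => normalForm_eq_of_stringStep
  · refine StringStep.eqvGen_le_of_forall_mem ?_
    rintro l r (⟨n, h⟩ | h | h) <;> cases h
    · exact eqvGen_acPowB_LPFinRules n
    all_goals exact .rel _ _ (StringStep.of_mem (by simp [LPFinRules]))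
  · exact Relation.EqvGen.mono (StringStep.mono LPFinRules_subset_LPInfRules) u v
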